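/- Let X and Y be nontrivial real Banach spaces and let 1 < p < ∞. Then X ⊕_p Y is not octahedral. -/

import Mathlib

open Metric Set
open scoped ENNReal

noncomputable section

/-- A slice of the closed unit ball determined by `f ∈ S_{X*}` and `α > 0` is
`{x ∈ B_X : f x > 1 - α}`.  `X` has the local diameter 2 property if every slice
of `B_X` has diameter 2. -/
def LocalDiameterTwoProp (X : Type*) [NormedAddCommGroup X] [NormedSpace ℝ X] : Prop :=
  ∀ f : X →L[ℝ] ℝ, ‖f‖ = 1 → ∀ α : ℝ, 0 < α →
    Metric.diam {x : X | ‖x‖ ≤ 1 ∧ 1 - α < f x} = 2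

/-- `X` has the diameter 2 property if every nonempty relatively weakly open
subset of `B_X` has diameter 2. -/
def DiameterTwoProp (X : Type*) [NormedAddCommGroup X] [NormedSpace ℝ X] : Prop :=
  ∀ U : Set (WeakSpace ℝ X), IsOpen U →
    {x : X | ‖x‖ ≤ 1 ∧ toWeakSpace ℝ X x ∈ U}.Nonempty →
    Metric.diam {x : X | ‖x‖ ≤ 1 ∧ toWeakSpace ℝ X x ∈ U} = 2

/-- `X` has the strong diameter 2 property if every convex combination of slices
of `B_X` has diameter 2. -/
def StrongDiameterTwoProp (X : Type*) [NormedAddCommGroup X] [NormedSpace ℝ X] : Prop :=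
  ∀ (n : ℕ) (lam : Fin n → ℝ) (f : Fin n → X →L[ℝ] ℝ) (α : Fin n → ℝ),
    (∀ i, 0 ≤ lam i) → (∑ i, lam i) = 1 → (∀ i, ‖f i‖ = 1) → (∀ i, 0 < α i) →
    Metric.diam {x : X | ∃ g : Fin n → X,
      (∀ i, ‖g i‖ ≤ 1 ∧ 1 - α i < f i (g i)) ∧ x = ∑ i, lam i • g i} = 2

/-- The dual of `X` has the weak* local diameter 2 property if every weak* slice
`{f ∈ B_{X*} : f x > 1 - α}` (with `x ∈ S_X`, `α > 0`) has diameter 2. -/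
def WStarLocalDiameterTwoProp (X : Type*) [NormedAddCommGroup X] [NormedSpace ℝ X] : Prop :=
  ∀ x : X, ‖x‖ = 1 → ∀ α : ℝ, 0 < α →
    Metric.diam {f : X →L[ℝ] ℝ | ‖f‖ ≤ 1 ∧ 1 - α < f x} = 2

/-- The dual of `X` has the weak* diameter 2 property if every nonempty relatively
weak* open subset of `B_{X*}` has diameter 2. -/
def WStarDiameterTwoProp (X : Type*) [NormedAddCommGroup X] [NormedSpace ℝ X] : Prop :=
  ∀ U : Set (WeakDual ℝ X), IsOpen U →
    {f : X →L[ℝ] ℝ | ‖f‖ ≤ 1 ∧ StrongDual.toWeakDual f ∈ U}.Nonempty →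
    Metric.diam {f : X →L[ℝ] ℝ | ‖f‖ ≤ 1 ∧ StrongDual.toWeakDual f ∈ U} = 2

/-- The dual of `X` has the weak* strong diameter 2 property if every convex
combination of weak* slices of `B_{X*}` has diameter 2. -/
def WStarStrongDiameterTwoProp (X : Type*) [NormedAddCommGroup X] [NormedSpace ℝ X] : Prop :=
  ∀ (n : ℕ) (lam : Fin n → ℝ) (x : Fin n → X) (α : Fin n → ℝ),
    (∀ i, 0 ≤ lam i) → (∑ i, lam i) = 1 → (∀ i, ‖x i‖ = 1) → (∀ i, 0 < α i) →
    Metric.diam {f : X →L[ℝ] ℝ | ∃ g : Fin n → (X →L[ℝ] ℝ),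
      (∀ i, ‖g i‖ ≤ 1 ∧ 1 - α i < g i (x i)) ∧ f = ∑ i, lam i • g i} = 2

/-- `X` is locally octahedral. -/
def LocallyOctahedral (X : Type*) [NormedAddCommGroup X] [NormedSpace ℝ X] : Prop :=
  ∀ x : X, ∀ ε : ℝ, 0 < ε → ∃ y : X, ‖y‖ = 1 ∧
    ∀ s : ℝ, (1 - ε) * (|s| * ‖x‖ + ‖y‖) ≤ ‖s • x + y‖

/-- `X` is weakly octahedral. -/
def WeaklyOctahedral (X : Type*) [NormedAddCommGroup X] [NormedSpace ℝ X] : Prop :=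
  ∀ E : Subspace ℝ X, FiniteDimensional ℝ E → ∀ f : X →L[ℝ] ℝ, ‖f‖ ≤ 1 →
    ∀ ε : ℝ, 0 < ε → ∃ y : X, ‖y‖ = 1 ∧
      ∀ x ∈ E, (1 - ε) * (|f x| + ‖y‖) ≤ ‖x + y‖

/-- The norm on `X` is octahedral. -/
def Octahedral (X : Type*) [NormedAddCommGroup X] [NormedSpace ℝ X] : Prop :=
  ∀ E : Subspace ℝ X, FiniteDimensional ℝ E → ∀ ε : ℝ, 0 < ε →
    ∃ y : X, ‖y‖ = 1 ∧ ∀ x ∈ E, (1 - ε) * (‖x‖ + ‖y‖) ≤ ‖x + y‖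

/-!
Take unit vectors `x₀ ∈ X`, `y₀ ∈ Y` and `e₁ = (x₀, 0)`, `e₂ = (0, y₀)`. If `y = (u, v)` is a
unit vector with `a = ‖u‖`, `b = ‖v‖`, then `a ^ p + b ^ p = 1`, and the triangle inequality in each
coordinate followed by Minkowski's inequality in `ℓ_p^2` give
`‖e₁ + y‖ ^ p + ‖e₂ + y‖ ^ p ≤ (1 + a) ^ p + (1 + b) ^ p + 1 ≤ (2 ^ (1/p) + 1) ^ p + 1`.
Octahedrality would make both `‖eᵢ + y‖` arbitrarily close to `2`, forcing
`2 * 2 ^ p ≤ (2 ^ (1/p) + 1) ^ p + 1`, which strict convexity of `t ↦ t ^ p` rules out.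
-/

open Filter Topology

lemma Octahedral.exists_sphere_le_norm_add_pair {X : Type*} [NormedAddCommGroup X]
    [NormedSpace ℝ X] (h : Octahedral X) (x₁ x₂ : X) {ε : ℝ} (hε : 0 < ε) :
    ∃ y : X, ‖y‖ = 1 ∧ (1 - ε) * (‖x₁‖ + 1) ≤ ‖x₁ + y‖ ∧ (1 - ε) * (‖x₂‖ + 1) ≤ ‖x₂ + y‖ := by
  obtain ⟨y, hy, hE⟩ := h (Submodule.span ℝ {x₁, x₂})
    (FiniteDimensional.span_of_finite ℝ (toFinite _)) ε hε
  refine ⟨y, hy, ?_, ?_⟩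
  · simpa only [hy] using hE x₁ (Submodule.subset_span (mem_insert _ _))
  · simpa only [hy] using hE x₂ (Submodule.subset_span (mem_insert_of_mem _ rfl))

lemma Octahedral.two_mul_two_rpow_le {X : Type*} [NormedAddCommGroup X] [NormedSpace ℝ X]
    (h : Octahedral X) {q C : ℝ} (hq : 0 < q) {x₁ x₂ : X} (hx₁ : ‖x₁‖ = 1) (hx₂ : ‖x₂‖ = 1)
    (hC : ∀ y : X, ‖y‖ = 1 → ‖x₁ + y‖ ^ q + ‖x₂ + y‖ ^ q ≤ C) :
    2 * 2 ^ q ≤ C := by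
  have hlim : Tendsto (fun ε : ℝ ↦ 2 * ((1 - ε) * 2) ^ q) (𝓝[>] 0) (𝓝 (2 * 2 ^ q)) := by
    have hcont : Continuous fun ε : ℝ ↦ 2 * ((1 - ε) * 2) ^ q := by
      fun_prop (disch := exact hq.le)
    simpa using (hcont.tendsto 0).mono_left nhdsWithin_le_nhds
  refine le_of_tendsto hlim ?_
  filter_upwards [Ioo_mem_nhdsGT one_pos] with ε ⟨hε₀, hε₁⟩
  obtain ⟨y, hy, h₁, h₂⟩ := h.exists_sphere_le_norm_add_pair x₁ x₂ hε₀
  rw [hx₁, one_add_one_eq_two] at h₁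
  rw [hx₂, one_add_one_eq_two] at h₂
  have hbase : 0 ≤ (1 - ε) * 2 := by linarith
  calc 2 * ((1 - ε) * 2) ^ q = ((1 - ε) * 2) ^ q + ((1 - ε) * 2) ^ q := two_mul _
    _ ≤ ‖x₁ + y‖ ^ q + ‖x₂ + y‖ ^ q := by gcongr
    _ ≤ C := hC y hy

lemma WithLp.prod_norm_rpow_eq_add {p : ℝ≥0∞} {α β : Type*} [SeminormedAddCommGroup α]
    [SeminormedAddCommGroup β] (hp : 0 < p.toReal) (f : WithLp p (α × β)) :
    ‖f‖ ^ p.toReal = ‖f.fst‖ ^ p.toReal + ‖f.snd‖ ^ p.toReal := by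
  rw [prod_norm_eq_add hp, one_div, Real.rpow_inv_rpow (by positivity) hp.ne']

lemma one_add_rpow_add_one_add_rpow_le {q a b : ℝ} (hq : 1 ≤ q) (ha : 0 ≤ a) (hb : 0 ≤ b)
    (hab : a ^ q + b ^ q = 1) :
    (1 + a) ^ q + (1 + b) ^ q ≤ ((2 : ℝ) ^ q⁻¹ + 1) ^ q := by
  have hq₀ : 0 < q := zero_lt_one.trans_le hq
  have hmink := Real.Lp_add_le_of_nonneg (s := Finset.univ) (f := ![1, 1]) (g := ![a, b]) hq
    (by simp) (by simp [Fin.forall_fin_two, ha, hb])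
  simp only [Fin.sum_univ_two, Matrix.cons_val_zero, Matrix.cons_val_one, Real.one_rpow, hab,
    one_div] at hmink
  rw [one_add_one_eq_two] at hmink
  calc (1 + a) ^ q + (1 + b) ^ q = (((1 + a) ^ q + (1 + b) ^ q) ^ q⁻¹) ^ q := by
        rw [Real.rpow_inv_rpow (add_nonneg (Real.rpow_nonneg (by linarith) _)
          (Real.rpow_nonneg (by linarith) _)) hq₀.ne']
    _ ≤ (2 ^ q⁻¹ + 1) ^ q := by gcongr

lemma two_rpow_inv_add_one_rpow_add_one_lt {q : ℝ} (hq : 1 < q) :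
    ((2 : ℝ) ^ q⁻¹ + 1) ^ q + 1 < 2 * 2 ^ q := by
  have hq₀ : 0 < q := zero_lt_one.trans hq
  set s : ℝ := 2 ^ q⁻¹
  have hs : s ^ q = 2 := by rw [← Real.rpow_mul zero_le_two, inv_mul_cancel₀ hq₀.ne', Real.rpow_one]
  have hs₁ : s ≠ 1 := (Real.one_lt_rpow one_lt_two (inv_pos.2 hq₀)).ne'
  have hmid : ((s + 1) / 2) ^ q < 3 / 2 := by
    have h := (strictConvexOn_rpow hq).2 (mem_Ici.2 (by positivity)) (mem_Ici.2 zero_le_one) hs₁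
      (by norm_num : (0 : ℝ) < 1 / 2) (by norm_num : (0 : ℝ) < 1 / 2) (by norm_num)
    simp only [smul_eq_mul, hs, Real.one_rpow] at h
    rw [show 1 / 2 * s + 1 / 2 * 1 = (s + 1) / 2 by ring] at h
    linarith
  have h2q : 2 < (2 : ℝ) ^ q := by
    simpa using Real.rpow_lt_rpow_of_exponent_lt one_lt_two hq
  have hsplit : (s + 1) ^ q = 2 ^ q * ((s + 1) / 2) ^ q := by
    rw [← Real.mul_rpow zero_le_two (by positivity), mul_div_cancel₀ _ two_ne_zero]
  nlinarith

namespace WithLp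

variable {p : ℝ≥0∞} {X Y : Type*} [SeminormedAddCommGroup X] [SeminormedAddCommGroup Y]

lemma norm_toLp_fst_add_rpow_le (hp : 0 < p.toReal) (x : X) (f : WithLp p (X × Y)) :
    ‖toLp p (x, (0 : Y)) + f‖ ^ p.toReal ≤ (‖x‖ + ‖f.fst‖) ^ p.toReal + ‖f.snd‖ ^ p.toReal := by
  rw [prod_norm_rpow_eq_add hp, add_fst, add_snd, toLp_fst, toLp_snd, zero_add]
  gcongr
  exact norm_add_le _ _

lemma norm_toLp_snd_add_rpow_le (hp : 0 < p.toReal) (y : Y) (f : WithLp p (X × Y)) :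
    ‖toLp p ((0 : X), y) + f‖ ^ p.toReal ≤ ‖f.fst‖ ^ p.toReal + (‖y‖ + ‖f.snd‖) ^ p.toReal := by
  rw [prod_norm_rpow_eq_add hp, add_fst, add_snd, toLp_fst, toLp_snd, zero_add]
  gcongr
  exact norm_add_le _ _

lemma norm_toLp_fst_add_rpow_add_norm_toLp_snd_add_rpow_le (hp : 1 ≤ p.toReal) {x : X} {y : Y}
    (hx : ‖x‖ = 1) (hy : ‖y‖ = 1) {f : WithLp p (X × Y)} (hf : ‖f‖ = 1) :
    ‖toLp p (x, (0 : Y)) + f‖ ^ p.toReal + ‖toLp p ((0 : X), y) + f‖ ^ p.toReal ≤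
      (2 ^ p.toReal⁻¹ + 1) ^ p.toReal + 1 := by
  have hp₀ : 0 < p.toReal := zero_lt_one.trans_le hp
  have hab : ‖f.fst‖ ^ p.toReal + ‖f.snd‖ ^ p.toReal = 1 := by
    rw [← prod_norm_rpow_eq_add hp₀, hf, Real.one_rpow]
  have h₁ := norm_toLp_fst_add_rpow_le hp₀ x f
  have h₂ := norm_toLp_snd_add_rpow_le hp₀ y f
  have hmink := one_add_rpow_add_one_add_rpow_le hp (norm_nonneg _) (norm_nonneg _) hab
  rw [hx] at h₁
  rw [hy] at h₂
  linarith

end WithLp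

theorem stmt_16_general (X Y : Type*) [NormedAddCommGroup X] [NormedSpace ℝ X] [Nontrivial X]
    [NormedAddCommGroup Y] [NormedSpace ℝ Y] [Nontrivial Y]
    (p : ℝ≥0∞) [Fact (1 ≤ p)] (hp : 1 < p) (hp' : p ≠ ⊤) :
    ¬ Octahedral (WithLp p (X × Y)) := by
  intro hoct
  have hq : 1 < p.toReal := by simpa using ENNReal.toReal_strict_mono hp' hp
  obtain ⟨x, hx⟩ := exists_norm_eq X zero_le_one
  obtain ⟨y, hy⟩ := exists_norm_eq Y zero_le_one
  have hle := hoct.two_mul_two_rpow_le (zero_lt_one.trans hq)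
    ((WithLp.norm_toLp_fst p X Y x).trans hx) ((WithLp.norm_toLp_snd p X Y y).trans hy)
    fun f hf ↦ WithLp.norm_toLp_fst_add_rpow_add_norm_toLp_snd_add_rpow_le hq.le hx hy hf
  exact (two_rpow_inv_add_one_rpow_add_one_lt hq).not_ge hle

theorem stmt_16 (X Y : Type*) [NormedAddCommGroup X] [NormedSpace ℝ X] [CompleteSpace X] [Nontrivial X]
    [NormedAddCommGroup Y] [NormedSpace ℝ Y] [CompleteSpace Y] [Nontrivial Y]
    (p : ℝ≥0∞) [Fact (1 ≤ p)] (hp : 1 < p) (hp' : p ≠ ⊤) :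
    ¬ Octahedral (WithLp p (X × Y)) :=
  stmt_16_general X Y p hp hp'
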